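/- Let N ≥ 1 be an integer, let λ ∈ (0, 1] and ε > 0, and let a₁, …, a_N be real numbers such that a_i ≥ −λ for every i, and such that for every index j, if a_j ≤ 1 − ε then |a_i| < ε for all i < j. Then Σ_{i=1}^N λ^{i−1}·a_i ≥ −λ^N − ε·(N−1). -/
import Mathlib


open Finset

private lemma tele_sum (l : ℝ) (m : ℕ) : ∀ n : ℕ, m ≤ n →
    ∑ i ∈ Finset.Ioc m n, (l ^ (i - 1) - l ^ i) = l ^ m - l ^ n := by
  intro n h
  induction n, h using Nat.le_induction with
  | base => simp
  | succ n hmn ih =>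
      rw [Finset.sum_Ioc_succ_top (by omega), ih]
      have hh : n + 1 - 1 = n := by omega
      rw [hh]; ring

/-- if `λ ∈ (0,1]`, `ε > 0`, and `a₁, …, a_N` are reals with
`a_i ≥ -λ` for all `i` and such that whenever `a_j ≤ 1 - ε` one has `|a_i| < ε`
for all `i < j`, then `Σ_{i=1}^N λ^{i-1}·a_i ≥ -λ^N - ε·(N-1)`. -/
theorem weighted_sum_lower_bound
    (N : ℕ) (hN : 1 ≤ N) (l ε : ℝ) (hl0 : 0 < l) (hl1 : l ≤ 1) (hε : 0 < ε)
    (a : ℕ → ℝ)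
    (ha : ∀ i, 1 ≤ i → i ≤ N → -l ≤ a i)
    (hsep : ∀ j, 1 ≤ j → j ≤ N → a j ≤ 1 - ε →
      ∀ i, 1 ≤ i → i < j → |a i| < ε) :
    -l ^ N - ε * ((N : ℝ) - 1) ≤ ∑ i ∈ Finset.Icc 1 N, l ^ (i - 1) * a i := by
  have hpowle : ∀ i : ℕ, l ^ i ≤ 1 := fun i => pow_le_one₀ hl0.le hl1
  have hpowpos : ∀ i : ℕ, 0 < l ^ i := fun i => pow_pos hl0 i
  have hIcc : Finset.Icc 1 N = Finset.Ioc 0 N := by ext x; simp; omega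
  rw [hIcc]
  by_cases hε1 : 1 ≤ ε
  · -- trivial case: each of first N-1 terms ≥ -ε, last ≥ -l^N
    obtain ⟨M, rfl⟩ : ∃ M, N = M + 1 := ⟨N - 1, by omega⟩
    rw [Finset.sum_Ioc_succ_top (Nat.zero_le M)]
    have h1 : ∀ i ∈ Finset.Ioc 0 M, (-ε : ℝ) ≤ l ^ (i - 1) * a i := by
      intro i hi
      simp only [Finset.mem_Ioc] at hi
      have hai := ha i hi.1 (by omega)
      have h2 := hpowle (i - 1)
      have h3 := hpowpos (i - 1)
      nlinarith
    have h2 := Finset.sum_le_sum h1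
    rw [Finset.sum_const, Nat.card_Ioc] at h2
    have hlast : -l ^ (M + 1) ≤ l ^ (M + 1 - 1) * a (M + 1) := by
      have hai := ha (M + 1) (by omega) le_rfl
      have hps : l ^ (M + 1 - 1) * l = l ^ (M + 1) := by
        rw [show M + 1 - 1 = M from rfl, pow_succ]
      nlinarith [hpowpos (M + 1 - 1)]
    simp only [Nat.sub_zero, nsmul_eq_mul] at h2
    simp only [Nat.add_sub_cancel] at hlast
    push_cast
    push_cast at h2
    linarith
  · push_neg at hε1
    by_cases hJ : ∃ j ∈ Finset.Icc 1 N, a j ≤ 1 - ε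
    · -- there is a "bad" index; take the largest
      set S := (Finset.Icc 1 N).filter (fun j => a j ≤ 1 - ε) with hSdef
      have hS : S.Nonempty := by
        obtain ⟨j, hj, hja⟩ := hJ
        exact ⟨j, Finset.mem_filter.mpr ⟨hj, hja⟩⟩
      obtain ⟨j0, hj0mem, hmax⟩ : ∃ j0 ∈ S, ∀ j ∈ S, j ≤ j0 :=
        ⟨S.max' hS, S.max'_mem hS, fun j hj => S.le_max' j hj⟩
      rw [hSdef, Finset.mem_filter, Finset.mem_Icc] at hj0mem
      obtain ⟨⟨hj01, hj0N⟩, hj0a⟩ := hj0mem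
      obtain ⟨m, rfl⟩ : ∃ m, j0 = m + 1 := ⟨j0 - 1, by omega⟩
      -- split the sum
      have hsplit : ∑ i ∈ Finset.Ioc 0 N, l ^ (i - 1) * a i
          = ((∑ i ∈ Finset.Ioc 0 m, l ^ (i - 1) * a i) + l ^ (m + 1 - 1) * a (m + 1))
            + ∑ i ∈ Finset.Ioc (m + 1) N, l ^ (i - 1) * a i := by
        rw [← Finset.sum_Ioc_consecutive _ (Nat.zero_le (m + 1)) hj0N,
          Finset.sum_Ioc_succ_top (Nat.zero_le m)]
      rw [hsplit]
      -- head bound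
      have hhead : ∀ i ∈ Finset.Ioc 0 m, (-ε : ℝ) ≤ l ^ (i - 1) * a i := by
        intro i hi
        simp only [Finset.mem_Ioc] at hi
        have habs := hsep (m + 1) hj01 hj0N hj0a i hi.1 (by omega)
        rw [abs_lt] at habs
        nlinarith [hpowle (i - 1), hpowpos (i - 1), habs.1,
          mul_nonneg (hpowpos (i - 1)).le (by linarith [habs.1] : (0:ℝ) ≤ a i + ε)]
      have hH := Finset.sum_le_sum hhead
      rw [Finset.sum_const, Nat.card_Ioc, Nat.sub_zero, nsmul_eq_mul] at hH
      -- middle bound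
      have hmid : -l ^ (m + 1) ≤ l ^ (m + 1 - 1) * a (m + 1) := by
        have hai := ha (m + 1) hj01 hj0N
        have hps : l ^ (m + 1 - 1) * l = l ^ (m + 1) := by
          rw [show m + 1 - 1 = m from rfl, pow_succ]
        nlinarith [hpowpos (m + 1 - 1)]
      simp only [Nat.add_sub_cancel] at hmid ⊢
      -- tail bound
      have htail : ∀ i ∈ Finset.Ioc (m + 1) N,
          (l ^ (i - 1) - l ^ i) - ε ≤ l ^ (i - 1) * a i := by
        intro i hi
        simp only [Finset.mem_Ioc] at hi
        have hnot : i ∉ S := fun hmem => by have := hmax i hmem; omega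
        rw [hSdef, Finset.mem_filter, Finset.mem_Icc] at hnot
        have hgt : 1 - ε < a i := by
          by_contra hc
          exact hnot ⟨⟨by omega, hi.2⟩, by linarith⟩
        nlinarith [hpowle (i - 1), hpowpos (i - 1), (hpowpos i).le,
          mul_le_mul_of_nonneg_left hgt.le (hpowpos (i - 1)).le]
      have hT := Finset.sum_le_sum htail
      rw [Finset.sum_sub_distrib, tele_sum l (m + 1) N hj0N, Finset.sum_const,
        Nat.card_Ioc, nsmul_eq_mul] at hT
      have hcast : ((N - (m + 1) : ℕ) : ℝ) = (N : ℝ) - (m + 1) := by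
        rw [Nat.cast_sub hj0N]; push_cast; ring
      rw [hcast] at hT
      push_cast at hH hT ⊢
      linarith
    · -- no bad index: every a i > 1 - ε
      push_neg at hJ
      have hall : ∀ i ∈ Finset.Ioc 0 N,
          (l ^ (i - 1) - l ^ i) - ε ≤ l ^ (i - 1) * a i := by
        intro i hi
        simp only [Finset.mem_Ioc] at hi
        have hgt : 1 - ε < a i := hJ i (Finset.mem_Icc.mpr ⟨hi.1, hi.2⟩)
        nlinarith [hpowle (i - 1), hpowpos (i - 1), (hpowpos i).le,
          mul_le_mul_of_nonneg_left hgt.le (hpowpos (i - 1)).le]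
      have hT := Finset.sum_le_sum hall
      rw [Finset.sum_sub_distrib, tele_sum l 0 N (by omega), Finset.sum_const,
        Nat.card_Ioc, Nat.sub_zero, nsmul_eq_mul, pow_zero] at hT
      have hN1 : (1 : ℝ) ≤ (N : ℝ) := by exact_mod_cast hN
      linarith
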